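/- arXiv:2110.10932 — 3 statements merged into one kernel-verified Lean document; each statement's English description precedes it below -/
import Mathlib

section
/- Let E ⊂ ℝ^p and F ⊂ ℝ^q be subspaces, and let f: ℝ^p → ℝ^p be of the form f(x) = (x_E, f_{E⊥}(x_{E⊥})) where f_{E⊥} is a bi-measurable bijection of E⊥. Then for γ_{E,F}* a fixed coupling on E × F, the set of (E,F)-constrained couplings satisfies Π_{E,F}(f_#μ, ν) = {(f, Id)_#γ : γ ∈ Π_{E,F}(μ, ν)}, where Π_{E,F}(μ,ν) = {γ ∈ Π(μ,ν) : (π^E, π^F)_#γ = γ_{E,F}*}. -/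
open MeasureTheory

/-- Let `E ⊂ ℝ^p`, `F ⊂ ℝ^q` be subspaces and `f(x) = (x_E, f_{E⊥}(x_{E⊥}))` with
`f_{E⊥}` a bi-measurable bijection of `E⊥`. Then for a fixed coupling `γ*` on `E × F`,
`Π_{E,F}(f_#μ, ν) = {(f, Id)_#γ : γ ∈ Π_{E,F}(μ, ν)}`, where `Π_{E,F}(μ,ν)` is the set
of couplings of `μ` and `ν` whose pushforward by `(π^E, π^F)` equals `γ*`. -/
theorem subspace_couplings_map_eq_image {p q : ℕ}
    (E : Submodule ℝ (EuclideanSpace ℝ (Fin p)))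
    (F : Submodule ℝ (EuclideanSpace ℝ (Fin q)))
    (μ : Measure (EuclideanSpace ℝ (Fin p))) (ν : Measure (EuclideanSpace ℝ (Fin q)))
    [IsProbabilityMeasure μ] [IsProbabilityMeasure ν]
    (γstar : Measure (↥E × ↥F))
    (fperp : ↥Eᗮ ≃ᵐ ↥Eᗮ)
    (f : EuclideanSpace ℝ (Fin p) → EuclideanSpace ℝ (Fin p))
    (hf : ∀ x, f x = (Submodule.orthogonalProjectionOnto E x : EuclideanSpace ℝ (Fin p)) +
        (fperp (Submodule.orthogonalProjectionOnto Eᗮ x) : EuclideanSpace ℝ (Fin p))) :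
    {γ : Measure (EuclideanSpace ℝ (Fin p) × EuclideanSpace ℝ (Fin q)) |
        (γ.map Prod.fst = μ.map f ∧ γ.map Prod.snd = ν) ∧
        γ.map (fun w => (Submodule.orthogonalProjectionOnto E w.1, Submodule.orthogonalProjectionOnto F w.2)) = γstar} =
      (fun γ : Measure (EuclideanSpace ℝ (Fin p) × EuclideanSpace ℝ (Fin q)) =>
          γ.map (Prod.map f id)) ''
        {γ | (γ.map Prod.fst = μ ∧ γ.map Prod.snd = ν) ∧
          γ.map (fun w => (Submodule.orthogonalProjectionOnto E w.1, Submodule.orthogonalProjectionOnto F w.2)) = γstar} := by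
  -- basic projection facts
  have projE : ∀ a b : EuclideanSpace ℝ (Fin p), ∀ (ha : a ∈ E) (hb : b ∈ Eᗮ),
      Submodule.orthogonalProjectionOnto E (a + b) = ⟨a, ha⟩ := by
    intro a b ha hb
    rw [map_add, Submodule.orthogonalProjectionOnto_mem_subspace_eq_self ⟨a, ha⟩,
      Submodule.orthogonalProjectionOnto_apply_of_mem_orthogonal hb]
    simp
  have projEperp : ∀ a b : EuclideanSpace ℝ (Fin p), ∀ (ha : a ∈ E) (hb : b ∈ Eᗮ),
      Submodule.orthogonalProjectionOnto Eᗮ (a + b) = ⟨b, hb⟩ := by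
    intro a b ha hb
    rw [map_add, Submodule.orthogonalProjectionOnto_mem_subspace_eq_self ⟨b, hb⟩,
      Submodule.orthogonalProjectionOnto_apply_of_mem_orthogonal
        (Submodule.le_orthogonal_orthogonal E ha)]
    simp
  set g : EuclideanSpace ℝ (Fin p) → EuclideanSpace ℝ (Fin p) := fun x =>
    (Submodule.orthogonalProjectionOnto E x : EuclideanSpace ℝ (Fin p)) +
      (fperp.symm (Submodule.orthogonalProjectionOnto Eᗮ x) : EuclideanSpace ℝ (Fin p)) with hg
  have hπEf : ∀ x, Submodule.orthogonalProjectionOnto E (f x) = Submodule.orthogonalProjectionOnto E x := by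
    intro x
    rw [hf x, projE _ _ (Submodule.orthogonalProjectionOnto E x).2 (fperp _).2]
  have hπEg : ∀ x, Submodule.orthogonalProjectionOnto E (g x) = Submodule.orthogonalProjectionOnto E x := by
    intro x
    rw [hg]
    rw [projE _ _ (Submodule.orthogonalProjectionOnto E x).2 (fperp.symm _).2]
  have hπperpf : ∀ x, Submodule.orthogonalProjectionOnto Eᗮ (f x) = fperp (Submodule.orthogonalProjectionOnto Eᗮ x) := by
    intro x
    rw [hf x, projEperp _ _ (Submodule.orthogonalProjectionOnto E x).2 (fperp _).2]
  have hπperpg : ∀ x, Submodule.orthogonalProjectionOnto Eᗮ (g x) = fperp.symm (Submodule.orthogonalProjectionOnto Eᗮ x) := by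
    intro x
    rw [hg]
    rw [projEperp _ _ (Submodule.orthogonalProjectionOnto E x).2 (fperp.symm _).2]
  have hsum : ∀ x : EuclideanSpace ℝ (Fin p),
      (Submodule.orthogonalProjectionOnto E x : EuclideanSpace ℝ (Fin p)) +
        (Submodule.orthogonalProjectionOnto Eᗮ x : EuclideanSpace ℝ (Fin p)) = x := fun x =>
    E.starProjection_add_starProjection_orthogonal x
  have hgf : ∀ x, g (f x) = x := by
    intro x
    show (Submodule.orthogonalProjectionOnto E (f x) : EuclideanSpace ℝ (Fin p)) + _ = x
    rw [hπEf, hπperpf]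
    simp [hsum x]
  have hfg : ∀ x, f (g x) = x := by
    intro x
    rw [hf (g x), hπEg, hπperpg]
    simp [hsum x]
  have hfm : Measurable f := by
    have : f = fun x => (Submodule.orthogonalProjectionOnto E x : EuclideanSpace ℝ (Fin p)) +
        (fperp (Submodule.orthogonalProjectionOnto Eᗮ x) : EuclideanSpace ℝ (Fin p)) := funext hf
    rw [this]
    exact ((continuous_subtype_val.comp (Submodule.orthogonalProjectionOnto E).continuous).measurable).add
      (continuous_subtype_val.measurable.comp
        (fperp.measurable.comp (Submodule.orthogonalProjectionOnto Eᗮ).continuous.measurable))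
  have hgm : Measurable g := by
    rw [hg]
    exact ((continuous_subtype_val.comp (Submodule.orthogonalProjectionOnto E).continuous).measurable).add
      (continuous_subtype_val.measurable.comp
        (fperp.symm.measurable.comp (Submodule.orthogonalProjectionOnto Eᗮ).continuous.measurable))
  have hFm : Measurable (Prod.map f (id : EuclideanSpace ℝ (Fin q) → _)) :=
    hfm.prodMap measurable_id
  have hGm : Measurable (Prod.map g (id : EuclideanSpace ℝ (Fin q) → _)) :=
    hgm.prodMap measurable_id
  have hprojm : Measurable (fun w : EuclideanSpace ℝ (Fin p) × EuclideanSpace ℝ (Fin q) =>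
      (Submodule.orthogonalProjectionOnto E w.1, Submodule.orthogonalProjectionOnto F w.2)) :=
    ((Submodule.orthogonalProjectionOnto E).continuous.measurable.comp measurable_fst).prodMk
      ((Submodule.orthogonalProjectionOnto F).continuous.measurable.comp measurable_snd)
  ext γ'
  simp only [Set.mem_image, Set.mem_setOf_eq]
  constructor
  · rintro ⟨⟨h1, h2⟩, h3⟩
    refine ⟨γ'.map (Prod.map g id), ⟨⟨?_, ?_⟩, ?_⟩, ?_⟩
    · rw [Measure.map_map measurable_fst hGm]
      have : (Prod.fst ∘ Prod.map g (id : EuclideanSpace ℝ (Fin q) → _)) = g ∘ Prod.fst := rfl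
      rw [this, ← Measure.map_map hgm measurable_fst, h1, Measure.map_map hgm hfm]
      have : g ∘ f = id := funext hgf
      rw [this, Measure.map_id]
    · rw [Measure.map_map measurable_snd hGm]
      exact h2
    · rw [Measure.map_map hprojm hGm]
      have : (fun w : EuclideanSpace ℝ (Fin p) × EuclideanSpace ℝ (Fin q) =>
          (Submodule.orthogonalProjectionOnto E w.1, Submodule.orthogonalProjectionOnto F w.2)) ∘ Prod.map g id =
          fun w => (Submodule.orthogonalProjectionOnto E w.1, Submodule.orthogonalProjectionOnto F w.2) := by
        funext w; simp [Prod.map, hπEg]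
      rw [this, h3]
    · rw [Measure.map_map hFm hGm]
      have : Prod.map f (id : EuclideanSpace ℝ (Fin q) → _) ∘ Prod.map g id = id := by
        funext w; simp [Prod.map, hfg]
      rw [this, Measure.map_id]
  · rintro ⟨γ, ⟨⟨h1, h2⟩, h3⟩, rfl⟩
    refine ⟨⟨?_, ?_⟩, ?_⟩
    · rw [Measure.map_map measurable_fst hFm]
      have : (Prod.fst ∘ Prod.map f (id : EuclideanSpace ℝ (Fin q) → _)) = f ∘ Prod.fst := rfl
      rw [this, ← Measure.map_map hfm measurable_fst, h1]
    · rw [Measure.map_map measurable_snd hFm]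
      exact h2
    · rw [Measure.map_map hprojm hFm]
      have : (fun w : EuclideanSpace ℝ (Fin p) × EuclideanSpace ℝ (Fin q) =>
          (Submodule.orthogonalProjectionOnto E w.1, Submodule.orthogonalProjectionOnto F w.2)) ∘ Prod.map f id =
          fun w => (Submodule.orthogonalProjectionOnto E w.1, Submodule.orthogonalProjectionOnto F w.2) := by
        funext w; simp [Prod.map, hπEf]
      rw [this, h3]
end

section
/- Subspace-constrained Gromov–Wasserstein with squared-distance loss is invariant under isometries on the orthogonal complements: for μ ∈ P(ℝ^p), ν ∈ P(ℝ^q) with compact supports, subspaces E ⊂ ℝ^p, F ⊂ ℝ^q, and f(x) = (x_E, g(x_{E⊥})) with g an affine isometry of E⊥, define GW_{E,F}(μ,ν) = inf_{γ∈Π_{E,F}(μ,ν)} ∬ (‖x−x'‖² − ‖y−y'‖²)² dγ dγ. Then GW_{E,F}(f_#μ, ν) = GW_{E,F}(μ, ν). -/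
open MeasureTheory
open scoped ENNReal

/-- The subspace-constrained Gromov–Wasserstein value with squared-distance loss:
infimum of `∬ (‖x−x'‖² − ‖y−y'‖²)² dγ dγ` over couplings `γ` of `μ` and `ν` whose
pushforward by `(π^E, π^F)` equals the fixed plan `γstar`. -/
noncomputable def GWEFdist {p q : ℕ}
    (E : Submodule ℝ (EuclideanSpace ℝ (Fin p)))
    (F : Submodule ℝ (EuclideanSpace ℝ (Fin q)))
    (γstar : Measure (↥E × ↥F))
    (μ : Measure (EuclideanSpace ℝ (Fin p))) (ν : Measure (EuclideanSpace ℝ (Fin q))) :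
    ℝ≥0∞ :=
  sInf ((fun γ : Measure (EuclideanSpace ℝ (Fin p) × EuclideanSpace ℝ (Fin q)) =>
      ∫⁻ w, ENNReal.ofReal ((‖w.1.1 - w.2.1‖ ^ 2 - ‖w.1.2 - w.2.2‖ ^ 2) ^ 2)
        ∂(γ.prod γ)) ''
    {γ | (γ.map Prod.fst = μ ∧ γ.map Prod.snd = ν) ∧
      γ.map (fun w => (E.orthogonalProjection w.1, F.orthogonalProjection w.2)) = γstar})

/-- Pushing forward the first marginal by a measurable map `h` that preserves distances and
commutes with the projection onto `E` maps the constrained coupling set (and hence the set of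
cost values) of `(μ, ν)` into that of `(μ.map h, ν)`. -/
lemma GW_value_set_subset {p q : ℕ} (E : Submodule ℝ (EuclideanSpace ℝ (Fin p)))
    (F : Submodule ℝ (EuclideanSpace ℝ (Fin q)))
    (γstar : Measure (↥E × ↥F))
    (μ : Measure (EuclideanSpace ℝ (Fin p))) (ν : Measure (EuclideanSpace ℝ (Fin q)))
    [IsProbabilityMeasure μ]
    (h : EuclideanSpace ℝ (Fin p) → EuclideanSpace ℝ (Fin p))
    (hmeas : Measurable h)
    (hdist : ∀ x y, ‖h x - h y‖ = ‖x - y‖)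
    (hproj : ∀ x, E.orthogonalProjection (h x) = E.orthogonalProjection x) :
    ((fun γ : Measure (EuclideanSpace ℝ (Fin p) × EuclideanSpace ℝ (Fin q)) =>
      ∫⁻ w, ENNReal.ofReal ((‖w.1.1 - w.2.1‖ ^ 2 - ‖w.1.2 - w.2.2‖ ^ 2) ^ 2)
        ∂(γ.prod γ)) ''
    {γ | (γ.map Prod.fst = μ ∧ γ.map Prod.snd = ν) ∧
      γ.map (fun w => (E.orthogonalProjection w.1, F.orthogonalProjection w.2)) = γstar}) ⊆
    ((fun γ : Measure (EuclideanSpace ℝ (Fin p) × EuclideanSpace ℝ (Fin q)) =>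
      ∫⁻ w, ENNReal.ofReal ((‖w.1.1 - w.2.1‖ ^ 2 - ‖w.1.2 - w.2.2‖ ^ 2) ^ 2)
        ∂(γ.prod γ)) ''
    {γ | (γ.map Prod.fst = μ.map h ∧ γ.map Prod.snd = ν) ∧
      γ.map (fun w => (E.orthogonalProjection w.1, F.orthogonalProjection w.2)) = γstar}) := by
  rintro - ⟨γ, ⟨⟨h1, h2⟩, h3⟩, rfl⟩
  have hγprob : IsProbabilityMeasure γ := by
    constructor
    have := congrArg (fun m : Measure (EuclideanSpace ℝ (Fin p)) => m Set.univ) h1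
    simpa [Measure.map_apply measurable_fst MeasurableSet.univ] using this
  have hm : Measurable (Prod.map h (id : EuclideanSpace ℝ (Fin q) → _)) :=
    hmeas.prodMap measurable_id
  refine ⟨γ.map (Prod.map h id), ⟨⟨?_, ?_⟩, ?_⟩, ?_⟩
  · rw [Measure.map_map measurable_fst hm, show (Prod.fst ∘ Prod.map h id) = h ∘ Prod.fst from rfl,
      ← Measure.map_map hmeas measurable_fst, h1]
  · rw [Measure.map_map measurable_snd hm, show (Prod.snd ∘ Prod.map h
      (id : EuclideanSpace ℝ (Fin q) → _)) = Prod.snd from rfl, h2]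
  · have hprojm : Measurable (fun w : EuclideanSpace ℝ (Fin p) × EuclideanSpace ℝ (Fin q) =>
        ((E.orthogonalProjection w.1 : ↥E), (F.orthogonalProjection w.2 : ↥F))) :=
      ((E.orthogonalProjection).continuous.measurable.comp measurable_fst).prodMk
        ((F.orthogonalProjection).continuous.measurable.comp measurable_snd)
    rw [Measure.map_map hprojm hm]
    convert h3 using 2
    funext w
    simp [Prod.map, hproj]
  · have key : (γ.map (Prod.map h id)).prod (γ.map (Prod.map h id)) =
        (γ.prod γ).map (Prod.map (Prod.map h id) (Prod.map h id)) :=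
      Measure.map_prod_map γ γ hm hm
    simp only []
    rw [key, lintegral_map ?_ (hm.prodMap hm)]
    · refine lintegral_congr fun w => ?_
      simp [Prod.map, hdist]
    · fun_prop

/-- Subspace-constrained Gromov–Wasserstein with squared-distance loss is invariant under
`f(x) = (x_E, g(x_{E⊥}))` with `g` a surjective (affine) isometry of `E⊥`. -/
theorem GWEFdist_isometry_invariant {p q : ℕ}
    (E : Submodule ℝ (EuclideanSpace ℝ (Fin p)))
    (F : Submodule ℝ (EuclideanSpace ℝ (Fin q)))
    (μ : Measure (EuclideanSpace ℝ (Fin p))) (ν : Measure (EuclideanSpace ℝ (Fin q)))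
    [IsProbabilityMeasure μ] [IsProbabilityMeasure ν]
    (hμ : ∃ K : Set (EuclideanSpace ℝ (Fin p)), IsCompact K ∧ μ Kᶜ = 0)
    (hν : ∃ K : Set (EuclideanSpace ℝ (Fin q)), IsCompact K ∧ ν Kᶜ = 0)
    (γstar : Measure (↥E × ↥F))
    (g : ↥Eᗮ → ↥Eᗮ) (hg : ∀ u v, ‖g u - g v‖ = ‖u - v‖) (hgsurj : Function.Surjective g)
    (f : EuclideanSpace ℝ (Fin p) → EuclideanSpace ℝ (Fin p))
    (hf : ∀ x, f x = (E.orthogonalProjection x : EuclideanSpace ℝ (Fin p)) +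
        (g (Eᗮ.orthogonalProjection x) : EuclideanSpace ℝ (Fin p))) :
    GWEFdist E F γstar (μ.map f) ν = GWEFdist E F γstar μ ν := by
  -- Pythagoras for the orthogonal decomposition
  have pyth : ∀ (a : ↥E) (b : ↥Eᗮ), ‖(a : EuclideanSpace ℝ (Fin p)) + b‖ ^ 2
      = ‖a‖ ^ 2 + ‖b‖ ^ 2 := by
    intro a b
    simp only [sq]
    exact norm_add_sq_eq_norm_sq_add_norm_sq_of_inner_eq_zero _ _ <|
      (Submodule.mem_orthogonal _ _).1 b.2 _ a.2
  -- f preserves distances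
  have fdist : ∀ x y, ‖f x - f y‖ = ‖x - y‖ := by
    intro x y
    have hdecomp : f x - f y =
        ((E.orthogonalProjection x - E.orthogonalProjection y : ↥E) : EuclideanSpace ℝ (Fin p)) +
        ((g (Eᗮ.orthogonalProjection x) - g (Eᗮ.orthogonalProjection y) : ↥Eᗮ) :
          EuclideanSpace ℝ (Fin p)) := by
      rw [hf, hf]; push_cast; abel
    have h1 : ‖f x - f y‖ ^ 2 = ‖x - y‖ ^ 2 := by
      rw [hdecomp, pyth, hg, Submodule.norm_sq_eq_add_norm_sq_projection (x - y) E,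
        map_sub, map_sub]
    nlinarith [h1, norm_nonneg (f x - f y), norm_nonneg (x - y),
      sq_nonneg (‖f x - f y‖ - ‖x - y‖)]
  -- f is surjective
  have fsurj : Function.Surjective f := by
    intro y
    obtain ⟨u, hu⟩ := hgsurj (Eᗮ.orthogonalProjection y)
    refine ⟨(E.orthogonalProjection y : EuclideanSpace ℝ (Fin p)) + u, ?_⟩
    rw [hf]
    have h1 : E.orthogonalProjection ((E.orthogonalProjection y : EuclideanSpace ℝ (Fin p)) + u)
        = E.orthogonalProjection y := by
      rw [map_add, Submodule.orthogonalProjectionOnto_mem_subspace_eq_self,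
        Submodule.orthogonalProjectionOnto_apply_of_mem_orthogonal u.2, add_zero]
    have h2 : Eᗮ.orthogonalProjection ((E.orthogonalProjection y : EuclideanSpace ℝ (Fin p)) + u)
        = u := by
      rw [map_add, Submodule.orthogonalProjectionOnto_mem_subspace_eq_self,
        Submodule.orthogonalProjectionOnto_apply_of_mem_orthogonal
          (Submodule.le_orthogonal_orthogonal E (E.orthogonalProjection y).2), zero_add]
    rw [h1, h2, hu]
    have := Submodule.starProjection_add_starProjection_orthogonal (K := E) y
    rw [Submodule.starProjection_apply, Submodule.starProjection_apply] at this
    exact this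
  -- f commutes with the projection onto E
  have fproj : ∀ x, E.orthogonalProjection (f x) = E.orthogonalProjection x := by
    intro x
    rw [hf, map_add, Submodule.orthogonalProjectionOnto_mem_subspace_eq_self,
      Submodule.orthogonalProjectionOnto_apply_of_mem_orthogonal (g _).2, add_zero]
  have finj : Function.Injective f := by
    intro x y hxy
    have : ‖x - y‖ = 0 := by rw [← fdist, hxy, sub_self, norm_zero]
    simpa [sub_eq_zero] using this
  have fiso : Isometry f := Isometry.of_dist_eq fun x y => by
    simpa [dist_eq_norm] using fdist x y
  have fmeas : Measurable f := fiso.continuous.measurable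
  -- the inverse of f
  set f' : EuclideanSpace ℝ (Fin p) → EuclideanSpace ℝ (Fin p) := Function.invFun f with hf'
  have hright : Function.RightInverse f' f := Function.rightInverse_invFun fsurj
  have hleft : Function.LeftInverse f' f := Function.leftInverse_invFun finj
  have f'dist : ∀ x y, ‖f' x - f' y‖ = ‖x - y‖ := by
    intro x y
    rw [← fdist (f' x) (f' y), hright x, hright y]
  have f'proj : ∀ x, E.orthogonalProjection (f' x) = E.orthogonalProjection x := by
    intro x
    conv_rhs => rw [← hright x]
    rw [fproj]
  have f'iso : Isometry f' := Isometry.of_dist_eq fun x y => by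
    simpa [dist_eq_norm] using f'dist x y
  have f'meas : Measurable f' := f'iso.continuous.measurable
  have hmapprob : IsProbabilityMeasure (μ.map f) := Measure.isProbabilityMeasure_map fmeas.aemeasurable
  have hback : (μ.map f).map f' = μ := by
    rw [Measure.map_map f'meas fmeas, show f' ∘ f = id from funext hleft, Measure.map_id]
  refine le_antisymm ?_ ?_
  · exact sInf_le_sInf (GW_value_set_subset E F γstar μ ν f fmeas fdist fproj)
  · have := GW_value_set_subset E F γstar (μ.map f) ν f' f'meas f'dist f'proj
    rw [hback] at this
    exact sInf_le_sInf this
end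

section
/- If γ_t = (Id × T_t)_#μ and γ_K = (Id × T_K)_#μ are deterministic couplings with γ_t converging weakly to γ_K as t → 0, μ and ν compactly supported on ℝ^d and T_K continuous on the support of μ, then T_t converges to T_K in L²(μ): ∫‖T_t(x) − T_K(x)‖² dμ(x) → 0. -/
open MeasureTheory Filter Topology

/-- If `γ_t = (Id × T_t)_#μ` converges weakly (as `t → 0⁺`) to `γ_K = (Id × T_K)_#μ`,
with `μ` compactly supported (on `K`), all maps taking values in a compact set `K'`
(compact support of the targets), and `T_K` continuous on `K`, then `T_t → T_K`
in `L²(μ)`. -/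
theorem tendsto_L2_of_weak_convergence {d : ℕ}
    (μ : Measure (EuclideanSpace ℝ (Fin d))) [IsProbabilityMeasure μ]
    (K K' : Set (EuclideanSpace ℝ (Fin d)))
    (hK : IsCompact K) (hμK : μ Kᶜ = 0) (hK' : IsCompact K')
    (Tt : ℝ → EuclideanSpace ℝ (Fin d) → EuclideanSpace ℝ (Fin d))
    (TK : EuclideanSpace ℝ (Fin d) → EuclideanSpace ℝ (Fin d))
    (hTtmeas : ∀ t, Measurable (Tt t)) (hTKmeas : Measurable TK)
    (hTtK' : ∀ t x, Tt t x ∈ K') (hTKK' : ∀ x, TK x ∈ K')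
    (hTKcont : ContinuousOn TK K)
    (hweak : ∀ f : BoundedContinuousFunction
        (EuclideanSpace ℝ (Fin d) × EuclideanSpace ℝ (Fin d)) ℝ,
      Tendsto (fun t => ∫ w, f w ∂(μ.map (fun x => (x, Tt t x))))
        (nhdsWithin 0 (Set.Ioi 0))
        (nhds (∫ w, f w ∂(μ.map (fun x => (x, TK x)))))) :
    Tendsto (fun t => ∫ x, ‖Tt t x - TK x‖ ^ 2 ∂μ)
      (nhdsWithin 0 (Set.Ioi 0)) (nhds 0) := by
  -- Extend TK to a continuous map on the whole space (Tietze)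
  obtain ⟨S, hS⟩ := (ContinuousMap.mk _ (continuousOn_iff_continuous_restrict.mp
    hTKcont)).exists_restrict_eq hK.isClosed
  have hSK : ∀ x ∈ K, S x = TK x := by
    intro x hx
    have := congrFun (congrArg DFunLike.coe hS) ⟨x, hx⟩
    simpa using this
  -- Bound on K'
  obtain ⟨C, hC⟩ := hK'.isBounded.subset_closedBall 0
  set M : ℝ := (2 * C) ^ 2 with hM
  have hC' : ∀ y ∈ K', ‖y‖ ≤ C := fun y hy => mem_closedBall_zero_iff.mp (hC hy)
  have hCnn : 0 ≤ C := (norm_nonneg _).trans (hC' _ (hTKK' 0))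
  -- the test function
  set g : EuclideanSpace ℝ (Fin d) × EuclideanSpace ℝ (Fin d) → ℝ :=
    fun p => min (‖p.2 - S p.1‖ ^ 2) M with hg
  have hgcont : Continuous g := by
    apply Continuous.min _ continuous_const
    exact ((continuous_snd.sub (S.continuous.comp continuous_fst)).norm.pow 2)
  have hg0 : ∀ p, 0 ≤ g p := fun p =>
    le_min (by positivity) (by positivity)
  have hgM : ∀ p, g p ≤ M := fun p => min_le_right _ _
  set f : BoundedContinuousFunction
      (EuclideanSpace ℝ (Fin d) × EuclideanSpace ℝ (Fin d)) ℝ :=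
    ⟨⟨g, hgcont⟩, M, fun p q => by
      simp only [ContinuousMap.coe_mk, Real.dist_eq]
      rw [abs_sub_le_iff]
      constructor <;> nlinarith [hg0 p, hg0 q, hgM p, hgM q]⟩ with hf
  have hfval : ∀ ⦃x y⦄, x ∈ K → y ∈ K' → f (x, y) = ‖y - TK x‖ ^ 2 := by
    intro x y hx hy
    have h1 : ‖y - TK x‖ ≤ 2 * C := by
      calc ‖y - TK x‖ ≤ ‖y‖ + ‖TK x‖ := norm_sub_le _ _
        _ ≤ C + C := add_le_add (hC' y hy) (hC' _ (hTKK' x))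
        _ = 2 * C := by ring
    have : ‖y - TK x‖ ^ 2 ≤ M := by
      rw [hM]; exact pow_le_pow_left₀ (norm_nonneg _) h1 2
    show min (‖y - S x‖ ^ 2) M = ‖y - TK x‖ ^ 2
    rw [hSK x hx]
    exact min_eq_left this
  have haeK : ∀ᵐ x ∂μ, x ∈ K := by
    rw [MeasureTheory.ae_iff]
    exact hμK
  -- rewrite integrals
  have key : ∀ t, (∫ w, f w ∂(μ.map (fun x => (x, Tt t x))))
      = ∫ x, ‖Tt t x - TK x‖ ^ 2 ∂μ := by
    intro t
    rw [integral_map (show Measurable fun x => (x, Tt t x) from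
      measurable_id.prodMk (hTtmeas t)).aemeasurable
      f.continuous.aestronglyMeasurable]
    refine integral_congr_ae ?_
    filter_upwards [haeK] with x hx
    exact hfval hx (hTtK' t x)
  have keyK : (∫ w, f w ∂(μ.map (fun x => (x, TK x)))) = 0 := by
    rw [integral_map (show Measurable fun x => (x, TK x) from
      measurable_id.prodMk hTKmeas).aemeasurable
      f.continuous.aestronglyMeasurable]
    rw [show (0:ℝ) = ∫ (_ : EuclideanSpace ℝ (Fin d)), (0:ℝ) ∂μ from (integral_zero _ _).symm]
    refine integral_congr_ae ?_
    filter_upwards [haeK] with x hx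
    rw [hfval hx (hTKK' x)]
    simp
  have := hweak f
  rw [keyK] at this
  refine this.congr fun t => key t
end
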